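/- Let G be a finite simple undirected connected graph with at least two vertices and positive vertex weights, and let {(B_1,C_1),…,(B_k,C_k)} be its bottleneck decomposition with α-ratios α_i = w(C_i)/w(B_i). Then for every i ∈ {1,…,k}: if α_i = 1 then i = k and B_k = C_k; and if α_i < 1 then B_i is an independent set of G and B_i ∩ C_i = ∅. -/
import Mathlib


open Finset

/-- The total weight of a finite set of vertices. -/
def wsum {V : Type*} (w : V → ℝ) (S : Finset V) : ℝ := ∑ v ∈ S, w v

/-- The neighborhood of `S` inside the induced subgraph on `A`: all vertices of `A` adjacent
to at least one vertex of `S`. -/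
def nbhdIn {V : Type*} [DecidableEq V] (G : SimpleGraph V) [DecidableRel G.Adj]
    (A S : Finset V) : Finset V :=
  A.filter fun v => ∃ u ∈ S, G.Adj u v

/-- The α-ratio of `S` computed inside the induced subgraph on `A`. -/
noncomputable def alphaIn {V : Type*} [DecidableEq V] (G : SimpleGraph V)
    [DecidableRel G.Adj] (w : V → ℝ) (A S : Finset V) : ℝ :=
  wsum w (nbhdIn G A S) / wsum w S

/-- `B` is the maximal bottleneck of the induced subgraph `G[A]`: it is a nonempty subset of
`A` of minimal α-ratio (within `G[A]`) and every strictly larger subset of `A` has strictly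
larger α-ratio. -/
def IsMaxBottleneckIn {V : Type*} [DecidableEq V] (G : SimpleGraph V) [DecidableRel G.Adj]
    (w : V → ℝ) (A B : Finset V) : Prop :=
  B.Nonempty ∧ B ⊆ A ∧
    (∀ S : Finset V, S.Nonempty → S ⊆ A → alphaIn G w A B ≤ alphaIn G w A S) ∧
    ∀ B' : Finset V, B ⊂ B' → B' ⊆ A → alphaIn G w A B < alphaIn G w A B'


lemma wsum_pos {V : Type*} {w : V → ℝ} (hw : ∀ v, 0 < w v) {S : Finset V}
    (hS : S.Nonempty) : 0 < wsum w S :=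
  Finset.sum_pos (fun v _ => hw v) hS

lemma wsum_mono {V : Type*} {w : V → ℝ} (hw : ∀ v, 0 < w v) {S T : Finset V}
    (h : S ⊆ T) : wsum w S ≤ wsum w T :=
  Finset.sum_le_sum_of_subset_of_nonneg h (fun v _ _ => (hw v).le)

lemma step_one {V : Type*} [DecidableEq V] (G : SimpleGraph V) [DecidableRel G.Adj]
    (w : V → ℝ) (hw : ∀ v, 0 < w v) (A B : Finset V)
    (hB : IsMaxBottleneckIn G w A B)
    (h1 : wsum w (nbhdIn G A B) / wsum w B = 1) :
    B = A ∧ B = nbhdIn G A B := by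
  obtain ⟨hne, hsub, hmin, hmax⟩ := hB
  have hBpos := wsum_pos hw hne
  have hCB : wsum w (nbhdIn G A B) = wsum w B := by
    field_simp at h1; linarith
  have hBA : B = A := by
    by_contra hne'
    have hss : B ⊂ A := hsub.ssubset_of_ne hne'
    have hgt := hmax A hss (Finset.Subset.refl A)
    have hApos := wsum_pos hw (hne.mono hsub)
    have hle : alphaIn G w A A ≤ 1 :=
      div_le_one_of_le₀ (wsum_mono hw (Finset.filter_subset _ _)) hApos.le
    have hb1 : alphaIn G w A B = 1 := h1
    rw [hb1] at hgt
    linarith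
  have hCsub : nbhdIn G A B ⊆ B := by
    conv_rhs => rw [hBA]
    exact Finset.filter_subset _ _
  have hsd : wsum w (B \ nbhdIn G A B) = 0 := by
    have := Finset.sum_sdiff (f := w) hCsub
    have h' : wsum w (B \ nbhdIn G A B) + wsum w (nbhdIn G A B) = wsum w B := this
    linarith
  have hemp : B \ nbhdIn G A B = ∅ := by
    by_contra h
    exact (wsum_pos hw (Finset.nonempty_iff_ne_empty.mpr h)).ne' hsd
  exact ⟨hBA, Finset.Subset.antisymm (Finset.sdiff_eq_empty_iff_subset.mp hemp) hCsub⟩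

lemma step_lt {V : Type*} [DecidableEq V] (G : SimpleGraph V) [DecidableRel G.Adj]
    (w : V → ℝ) (hw : ∀ v, 0 < w v) (A B : Finset V)
    (hB : IsMaxBottleneckIn G w A B)
    (h1 : wsum w (nbhdIn G A B) / wsum w B < 1) :
    B ∩ nbhdIn G A B = ∅ := by
  set C := nbhdIn G A B with hCdef
  obtain ⟨hne, hsub, hmin, hmax⟩ := hB
  have hBpos := wsum_pos hw hne
  have hCB : wsum w C < wsum w B := by rwa [div_lt_one hBpos] at h1
  by_contra hD
  have hDne : (B ∩ C).Nonempty := Finset.nonempty_iff_ne_empty.mpr hD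
  have hTne : (B \ C).Nonempty := by
    rw [Finset.sdiff_nonempty]
    intro hBC
    exact absurd (wsum_mono hw hBC) (not_le.mpr hCB)
  have hTsub : B \ C ⊆ A := Finset.sdiff_subset.trans hsub
  -- neighborhood of T is contained in C \ B
  have hGT : nbhdIn G A (B \ C) ⊆ C \ B := by
    intro v hv
    rw [nbhdIn, Finset.mem_filter] at hv
    obtain ⟨hvA, t, htT, hadj⟩ := hv
    obtain ⟨htB, htC⟩ := Finset.mem_sdiff.mp htT
    have hvC : v ∈ C := by
      rw [hCdef, nbhdIn, Finset.mem_filter]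
      exact ⟨hvA, t, htB, hadj⟩
    refine Finset.mem_sdiff.mpr ⟨hvC, fun hvB => htC ?_⟩
    rw [hCdef, nbhdIn, Finset.mem_filter]
    exact ⟨hsub htB, v, hvB, hadj.symm⟩
  have hTpos := wsum_pos hw hTne
  have hDpos := wsum_pos hw hDne
  -- weight bookkeeping
  have hsplit : wsum w (B ∩ C) + wsum w (B \ C) = wsum w B :=
    Finset.sum_inter_add_sum_sdiff B C w
  have hCD : wsum w (C \ B) + wsum w (B ∩ C) = wsum w C := by
    have := Finset.sum_sdiff (f := w) (Finset.inter_subset_right (s₁ := B) (s₂ := C))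
    have h' : wsum w (C \ (B ∩ C)) + wsum w (B ∩ C) = wsum w C := this
    rwa [show C \ (B ∩ C) = C \ B by rw [Finset.inter_comm, Finset.sdiff_inter_self_left]] at h'
  have hGTle : wsum w (nbhdIn G A (B \ C)) ≤ wsum w (C \ B) := wsum_mono hw hGT
  have hmin' := hmin (B \ C) hTne hTsub
  rw [alphaIn, alphaIn] at hmin'
  rw [div_le_div_iff₀ hBpos hTpos] at hmin'
  nlinarith [mul_le_mul_of_nonneg_right hGTle hBpos.le, mul_pos hDpos hBpos,
    mul_pos hDpos (sub_pos.mpr hCB)]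

/-- in the bottleneck decomposition of a connected graph with at least two
vertices and positive vertex weights, for every `i`: if `α_i = 1` then `i = k` and
`B_k = C_k`; and if `α_i < 1` then `B_i` is independent and `B_i ∩ C_i = ∅`. -/
theorem bottleneck_decomposition_structure {V : Type*} [Fintype V] [DecidableEq V]
    (G : SimpleGraph V) [DecidableRel G.Adj] (w : V → ℝ)
    (hw : ∀ v, 0 < w v) (hconn : G.Connected) (hcard : 2 ≤ Fintype.card V)
    (k : ℕ) (B C : Fin k → Finset V) (Vs : Fin (k + 1) → Finset V)
    (hV0 : Vs 0 = univ)
    (hVsucc : ∀ i : Fin k, Vs i.succ = Vs i.castSucc \ (B i ∪ C i))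
    (hVlast : Vs (Fin.last k) = ∅)
    (hB : ∀ i : Fin k, IsMaxBottleneckIn G w (Vs i.castSucc) (B i))
    (hC : ∀ i : Fin k, C i = nbhdIn G (Vs i.castSucc) (B i)) :
    ∀ i : Fin k,
      (wsum w (C i) / wsum w (B i) = 1 → i.val + 1 = k ∧ B i = C i) ∧
      (wsum w (C i) / wsum w (B i) < 1 →
        (∀ u ∈ B i, ∀ v ∈ B i, ¬ G.Adj u v) ∧ B i ∩ C i = ∅) := by
  intro i
  have hCi := hC i
  constructor
  · intro h1
    rw [hCi] at h1
    obtain ⟨hBA, hBC⟩ := step_one G w hw _ _ (hB i) h1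
    refine ⟨?_, hBC.trans hCi.symm⟩
    by_contra hik
    have hlt : i.val + 1 < k := lt_of_le_of_ne i.isLt hik
    set j : Fin k := ⟨i.val + 1, hlt⟩ with hj
    have hjc : j.castSucc = i.succ := by
      apply Fin.ext
      simp [hj]
    have hVempty : Vs i.succ = ∅ := by
      rw [hVsucc i]
      apply Finset.sdiff_eq_empty_iff_subset.mpr
      rw [← hBA]
      exact Finset.subset_union_left
    have hjne := (hB j).1
    have hjsub := (hB j).2.1
    rw [hjc, hVempty] at hjsub
    exact hjne.ne_empty (Finset.subset_empty.mp hjsub)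
  · intro h1
    rw [hCi] at h1
    have hdisj := step_lt G w hw _ _ (hB i) h1
    have hind : ∀ u ∈ B i, ∀ v ∈ B i, ¬ G.Adj u v := by
      intro u hu v hv hadj
      have hvC : v ∈ nbhdIn G (Vs i.castSucc) (B i) := by
        rw [nbhdIn, Finset.mem_filter]
        exact ⟨(hB i).2.1 hv, u, hu, hadj⟩
      have : v ∈ B i ∩ nbhdIn G (Vs i.castSucc) (B i) := Finset.mem_inter.mpr ⟨hv, hvC⟩
      rw [hdisj] at this
      exact absurd this (Finset.notMem_empty v)
    exact ⟨hind, by rw [hCi]; exact hdisj⟩
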